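/- Let S be a smooth projective surface, C, C_{i₀} ⊂ S curves with C·C_{i₀} = 1, D a divisor on S numerically trivial in an ambient smooth projective variety Y ⊇ S with D·C = 1 in S, and suppose deg(D²) = 2ℓ. Let H be a very ample divisor on S restricted from Y such that H − ℓC + D and H − ℓC admit smooth connected members E₁ ∈ |H − ℓC + D| and E₂ ∈ |H − ℓC|. If K_S is restricted from a divisor on Y, then by adjunction 2g(E₁) − 2 = (H − ℓC)·(H − ℓC + K_S) = 2g(E₂) − 2, so g(E₁) = g(E₂). -/
import Mathlib


/-- Let `S ⊂ Y` be a smooth projective surface (encoded by its group of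
divisor classes with symmetric biadditive intersection pairing), `C` a curve with
`D·C = 1`, `D` a divisor on `S` numerically trivial on the ambient variety `Y` (i.e.,
orthogonal to all classes restricted from `Y`), `deg(D²) = 2ℓ`, `H` very ample
restricted from `Y`, `K_S` restricted from `Y`, and `E₁ ∈ |H − ℓC + D|`,
`E₂ ∈ |H − ℓC|` smooth connected members with genera `g₁, g₂` given by adjunction.
Then `E₁·(E₁+K_S) = (H − ℓC)·(H − ℓC + K_S) = E₂·(E₂+K_S)` and `g₁ = g₂`. -/
theorem statement8
    (Div : Type) [AddCommGroup Div]
    (inter : Div → Div → ℤ)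
    (hsymm : ∀ a b, inter a b = inter b a)
    (haddl : ∀ a b c, inter (a + b) c = inter a c + inter b c)
    (hsmul : ∀ (m : ℤ) (a b : Div), inter (m • a) b = m * inter a b)
    (restricted : Div → Prop)     -- divisor classes restricted from the ambient Y
    (H C D K : Div) (ℓ : ℤ)
    (hH : restricted H) (hK : restricted K)
    (hnum : ∀ W, restricted W → inter D W = 0)    -- D numerically trivial on Y
    (hDC : inter D C = 1)
    (hDD : inter D D = 2 * ℓ)
    (E₁ E₂ : Div)
    (hE₁ : E₁ = H - ℓ • C + D) (hE₂ : E₂ = H - ℓ • C)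
    (g₁ g₂ : ℤ)
    (hadj₁ : 2 * g₁ - 2 = inter E₁ (E₁ + K))
    (hadj₂ : 2 * g₂ - 2 = inter E₂ (E₂ + K)) :
    inter E₁ (E₁ + K) = inter (H - ℓ • C) (H - ℓ • C + K) ∧ g₁ = g₂ := by
  have haddr : ∀ a b c, inter a (b + c) = inter a b + inter a c := fun a b c => by
    rw [hsymm, haddl, hsymm b a, hsymm c a]
  have hsmulr : ∀ (m : ℤ) (a b : Div), inter a (m • b) = m * inter a b := fun m a b => by
    rw [hsymm, hsmul, hsymm]
  have hsubl : ∀ a b c, inter (a - b) c = inter a c - inter b c := fun a b c => by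
    have := haddl (a - b) b c; simp at this; omega
  have hsubr : ∀ a b c, inter a (b - c) = inter a b - inter a c := fun a b c => by
    rw [hsymm, hsubl, hsymm b a, hsymm c a]
  have hDH := hnum H hH
  have hDK := hnum K hK
  have key : inter E₁ (E₁ + K) = inter (H - ℓ • C) (H - ℓ • C + K) := by
    subst hE₁
    simp only [haddl, haddr, hsubl, hsubr, hsmul, hsmulr, hsymm H D, hsymm C D, hsymm K D,
      hDD, hDH, hDK, hDC]
    ring
  refine ⟨key, ?_⟩
  rw [key, ← hE₂, ← hadj₂] at hadj₁
  omega
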